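/- Let X be a Banach space containing a closed subspace isomorphic to ℓ∞ (for instance, any infinite-dimensional injective Banach space). Then for every countable ordinal α < ω₁ there exists a totally imperfect closed subset A ⊆ X with CD^α(A) ≠ ∅ and CD^{α+1}(A) = ∅; hence the condensation rank of X is at least ω₁. -/

import Mathlib

/-- The condensation derivative: the set of condensation points of `A`,
i.e. points every neighborhood of which meets `A` in an uncountable set. -/
def CD (X : Type*) [TopologicalSpace X] (A : Set X) : Set X :=
  {p | ∀ U ∈ nhds p, ¬(U ∩ A).Countable}

/-- Transfinite iterates of the condensation derivative. -/
noncomputable def CDiter (X : Type*) [TopologicalSpace X] (A : Set X) : Ordinal → Set X :=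
  fun o => Ordinal.limitRecOn o A (fun _ ih => CD X ih)
    (fun o _ ih => ⋂ (b : Set.Iio o), ih b.1 b.2)

/-!
Fix a countable ordinal `α` and `e : ℕ → Ordinal` taking every value below `α` infinitely often.
Grow a tree in `ℓ^∞(ℕ × ℕ)` from the root `0`: an edge labelled `(k, S) ∈ ℕ × Set ℕ` leads to a
node of rank `e k`, smaller than the rank of its parent (the root has rank `α`), at distance
`2⁻ᵏ` from the parent, and distinct siblings are at least `2⁻ᵏ` apart. So every node has continuum
many children of each smaller rank arbitrarily close to it, while a small ball around it contains
only its descendants, all of smaller rank. Hence the condensation derivative of the nodes of rank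
`≥ β` is the set of nodes of rank `≥ β + 1`: `CD^α` of the tree is the root and `CD^(α+1)` is
empty. A nonempty perfect subset cannot exist, because its point of minimal rank would be
isolated in it. Closed embeddings `ℓ^∞(ℕ × ℕ) → ℓ^∞ → X` carry everything over to `X`.
-/

open Set Topology Filter Function
open scoped lp ENNReal

section CondensationDerivative

variable {X Y : Type*} [TopologicalSpace X] [TopologicalSpace Y]

def IsTotallyImperfect (A : Set X) : Prop := ∀ P ⊆ A, Perfect P → P = ∅

@[simp] lemma CDiter_zero (A : Set X) : CDiter X A 0 = A :=
  Ordinal.limitRecOn_zero ..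

@[simp] lemma CDiter_add_one (A : Set X) (o : Ordinal) :
    CDiter X A (o + 1) = CD X (CDiter X A o) :=
  Ordinal.limitRecOn_add_one ..

lemma CDiter_limit (A : Set X) {o : Ordinal} (ho : Order.IsSuccLimit o) :
    CDiter X A o = ⋂ b : Iio o, CDiter X A b :=
  Ordinal.limitRecOn_limit _ _ _ _ ho

lemma CD_subset_closure (A : Set X) : CD X A ⊆ closure A := by
  refine fun p hp => mem_closure_iff_nhds.2 fun U hU => ?_
  by_contra hempty
  exact hp U hU (not_nonempty_iff_eq_empty.1 hempty ▸ countable_empty)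

lemma Topology.IsEmbedding.mem_CD_image_iff {e : Y → X} (he : IsEmbedding e) {A : Set Y} {p : Y} :
    e p ∈ CD X (e '' A) ↔ p ∈ CD Y A := by
  have hcount (U : Set X) : (U ∩ e '' A).Countable ↔ (e ⁻¹' U ∩ A).Countable := by
    rw [← image_preimage_inter, inter_comm]
    exact ⟨countable_of_injective_of_countable_image he.injective.injOn, fun h => h.image e⟩
  simp only [CD, mem_ofPred_eq, hcount, he.isInducing.nhds_eq_comap p, mem_comap]
  refine ⟨fun h V ⟨U, hU, hUV⟩ hV => h U hU (hV.mono (inter_subset_inter_left A hUV)),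
    fun h U hU => h _ ⟨U, hU, subset_rfl⟩⟩

lemma Topology.IsClosedEmbedding.CD_image {e : Y → X} (he : IsClosedEmbedding e) (A : Set Y) :
    CD X (e '' A) = e '' CD Y A := by
  refine subset_antisymm (fun q hq => ?_) (image_subset_iff.2 fun p => he.mem_CD_image_iff.2)
  obtain ⟨p, rfl⟩ : q ∈ range e := he.isClosed_range.closure_subset_iff.2 (image_subset_range e A)
    (CD_subset_closure _ hq)
  exact mem_image_of_mem e (he.mem_CD_image_iff.1 hq)

lemma Topology.IsClosedEmbedding.CDiter_image {e : Y → X} (he : IsClosedEmbedding e) (A : Set Y)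
    (o : Ordinal) : CDiter X (e '' A) o = e '' CDiter Y A o := by
  induction o using Ordinal.limitRecOn with
  | zero => simp
  | add_one o ih => simp [ih, he.CD_image]
  | limit o ho ih =>
    simp only [CDiter_limit _ ho, iInter_subtype, mem_Iio]
    rw [he.injective.injOn.image_biInter_eq ⟨0, ho.bot_lt⟩]
    exact iInter₂_congr ih

lemma Topology.IsEmbedding.isTotallyImperfect_image {e : Y → X} (he : IsEmbedding e) {A : Set Y}
    (hA : IsTotallyImperfect A) : IsTotallyImperfect (e '' A) := by
  intro P hPA hP
  have hQ : Perfect (e ⁻¹' P) := by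
    refine ⟨hP.closed.preimage he.continuous, fun x hx => accPt_iff_nhds.2 fun V hV => ?_⟩
    obtain ⟨U, hU, hUV⟩ := (he.isInducing.nhds_eq_comap x ▸ hV : V ∈ comap e (𝓝 (e x)))
    obtain ⟨_, ⟨hyU, hyP⟩, hyx⟩ := accPt_iff_nhds.1 (hP.acc _ hx) U hU
    obtain ⟨z, -, rfl⟩ := hPA hyP
    exact ⟨z, ⟨hUV hyU, hyP⟩, ne_of_apply_ne e hyx⟩
  have hQA : e ⁻¹' P ⊆ A := fun x hx => by
    obtain ⟨y, hy, hyx⟩ := hPA hx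
    rwa [← he.injective hyx]
  have := hA _ hQA hQ
  rw [← image_preimage_eq_of_subset (hPA.trans (image_subset_range e A)), this, image_empty]

end CondensationDerivative

namespace lp

variable {ι κ : Type*} {g : ι → κ}

lemma norm_extend_le (x : ℓ^∞(ι, ℝ)) (k : κ) : ‖extend g (fun i => x i) 0 k‖ ≤ ‖x‖ := by
  classical
  rw [extend_def]
  split_ifs
  · exact lp.norm_apply_le_norm ENNReal.top_ne_zero x _
  · simp

noncomputable def extendByZero (hg : Injective g) : ℓ^∞(ι, ℝ) →ₗᵢ[ℝ] ℓ^∞(κ, ℝ) where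
  toFun x := ⟨extend g (fun i => x i) 0, memℓp_infty ⟨‖x‖, forall_mem_range.2 (norm_extend_le x)⟩⟩
  map_add' x y := lp.ext <| funext fun k =>
    show extend g (fun i => (x + y) i) 0 k =
      extend g (fun i => x i) 0 k + extend g (fun i => y i) 0 k by
    by_cases hk : ∃ i, g i = k
    · obtain ⟨i, rfl⟩ := hk
      simp [hg.extend_apply]
    · simp [extend_apply' _ _ _ hk]
  map_smul' c x := lp.ext <| funext fun k =>
    show extend g (fun i => (c • x) i) 0 k = c * extend g (fun i => x i) 0 k by
    by_cases hk : ∃ i, g i = k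
    · obtain ⟨i, rfl⟩ := hk
      simp [hg.extend_apply]
    · simp [extend_apply' _ _ _ hk]
  norm_map' x := by
    refine le_antisymm (lp.norm_le_of_forall_le (norm_nonneg x) (norm_extend_le x)) ?_
    refine lp.norm_le_of_forall_le (norm_nonneg _) fun i => ?_
    refine le_trans ?_ (lp.norm_apply_le_norm ENNReal.top_ne_zero _ (g i))
    exact (congrArg norm (hg.extend_apply _ _ i)).ge

lemma extendByZero_apply (hg : Injective g) (x : ℓ^∞(ι, ℝ)) (i : ι) :
    extendByZero hg x (g i) = x i :=
  hg.extend_apply _ _ i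

lemma extendByZero_apply_of_notMem (hg : Injective g) (x : ℓ^∞(ι, ℝ)) {k : κ} (hk : k ∉ range g) :
    extendByZero hg x k = 0 :=
  extend_apply' _ _ k hk

lemma abs_sub_apply_le_dist (x y : ℓ^∞(ι, ℝ)) (i : ι) : |x i - y i| ≤ dist x y := by
  simpa [dist_eq_norm] using lp.norm_apply_le_norm ENNReal.top_ne_zero (x - y) i

end lp

lemma isClosed_insert_iUnion_of_dist_le {X ι : Type*} [MetricSpace X] {p : X} {F : ι → Set X}
    (hF : ∀ i, IsClosed (F i))
    (hsep : ∀ i j, i ≠ j → ∀ x ∈ F i, ∀ y ∈ F j, dist p x ≤ dist x y) :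
    IsClosed (insert p (⋃ i, F i)) := by
  refine isOpen_compl_iff.1 (Metric.isOpen_iff.2 fun z hz => ?_)
  set d := dist z p
  have hd : 0 < d := dist_pos.2 fun h => hz (h ▸ mem_insert _ _)
  have hp : ∀ w ∈ Metric.ball z (d / 3), w ≠ p := fun w hw h => by
    rw [Metric.mem_ball, h, dist_comm] at hw
    linarith
  by_cases hmeet : ∃ i, ∃ x ∈ F i, dist x z < d / 3
  · obtain ⟨i, x, hx, hxz⟩ := hmeet
    obtain ⟨ε, hε, hball⟩ := Metric.isOpen_iff.1 (hF i).isOpen_compl z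
      fun h => hz (mem_insert_of_mem _ (mem_iUnion.2 ⟨i, h⟩))
    refine ⟨min ε (d / 3), lt_min hε (by positivity), fun w hw hwA => ?_⟩
    have hwz : dist w z < d / 3 := hw.trans_le (min_le_right _ _)
    obtain ⟨j, hj⟩ := mem_iUnion.1 (hwA.resolve_left (hp w hwz))
    have hij : i ≠ j := fun h => hball (Metric.ball_subset_ball (min_le_left _ _) hw) (h ▸ hj)
    have := hsep i j hij x hx w hj
    linarith [dist_triangle z x p, dist_triangle x z w, dist_comm z x, dist_comm z w, dist_comm x p]
  · refine ⟨d / 3, by positivity, fun w hw hwA => ?_⟩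
    obtain ⟨j, hj⟩ := mem_iUnion.1 (hwA.resolve_left (hp w hw))
    exact hmeet ⟨j, w, hj, hw⟩

instance : Uncountable (Set ℕ) :=
  ⟨fun _ => let ⟨g, hg⟩ := exists_injective_nat (Set ℕ); cantor_injective g hg⟩

lemma countable_Iio_of_lt_ord_aleph_one {α : Ordinal} (hα : α < (Cardinal.aleph 1).ord) :
    (Iio α).Countable := by
  rw [← Cardinal.le_aleph0_iff_set_countable, Cardinal.mk_Iio_ordinal, Cardinal.lift_le_aleph0,
    ← Order.lt_succ_iff, Cardinal.succ_aleph0]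
  exact Cardinal.lt_ord.1 hα

lemma exists_frequently_eq_of_countable {α : Type*} [Nonempty α] {s : Set α} (hs : s.Countable) :
    ∃ e : ℕ → α, ∀ β ∈ s, ∃ᶠ k in atTop, e k = β := by
  obtain ⟨f, hf⟩ := countable_iff_exists_subset_range.1 hs
  refine ⟨fun k => f k.unpair.1, fun β hβ => ?_⟩
  obtain ⟨a, rfl⟩ := hf hβ
  exact frequently_atTop.2 fun N => ⟨Nat.pair a N, Nat.right_le_pair a N, by simp⟩

namespace CondensationTree

noncomputable def indicatorVec (s : Set ℕ) : ℓ^∞(ℕ, ℝ) :=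
  ⟨s.indicator 1, memℓp_infty ⟨1, forall_mem_range.2 fun j => by
    by_cases hj : j ∈ s <;> simp [hj]⟩⟩

noncomputable def level0 : ℓ^∞(ℕ, ℝ) →ₗᵢ[ℝ] ℓ^∞(ℕ × ℕ, ℝ) :=
  lp.extendByZero (g := fun j => (0, j)) fun _ _ h => (Prod.ext_iff.1 h).2

noncomputable def shift : ℓ^∞(ℕ × ℕ, ℝ) →ₗᵢ[ℝ] ℓ^∞(ℕ × ℕ, ℝ) :=
  lp.extendByZero (Prod.map_injective.2 ⟨Nat.succ_injective, injective_id⟩)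

/-- The level-0 support of the edge label `(k, S)`: the even position `2 * k` separates labels with
different `k`, the odd positions `2 * j + 1`, `j ∈ S`, labels with different `S`. -/
def marks (k : ℕ) (S : Set ℕ) : Set ℕ := insert (2 * k) ((fun j => 2 * j + 1) '' S)

/-- Hanging the tree with root `0` below the root along the edge `(k, S)`: level 0 records the
label, `x` moves one level down, and everything is scaled by `2⁻¹ ^ k`. -/
noncomputable def child (k : ℕ) (S : Set ℕ) (x : ℓ^∞(ℕ × ℕ, ℝ)) : ℓ^∞(ℕ × ℕ, ℝ) :=
  ((2 : ℝ)⁻¹ ^ k) • (level0 (indicatorVec (marks k S)) + shift x)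

lemma child_apply_zero (k S x j) :
    child k S x (0, j) = (2 : ℝ)⁻¹ ^ k * (marks k S).indicator 1 j := by
  have h0 : shift x (0, j) = 0 := lp.extendByZero_apply_of_notMem _ _ (by simp)
  have h1 : level0 (indicatorVec (marks k S)) (0, j) = (marks k S).indicator 1 j :=
    lp.extendByZero_apply _ _ j
  rw [child, lp.coeFn_smul, lp.coeFn_add, Pi.smul_apply, Pi.add_apply, h0, h1, add_zero,
    smul_eq_mul]

lemma child_apply_succ (k S x i j) : child k S x (i + 1, j) = (2 : ℝ)⁻¹ ^ k * x (i, j) := by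
  have h0 : level0 (indicatorVec (marks k S)) (i + 1, j) = 0 :=
    lp.extendByZero_apply_of_notMem _ _ (by simp)
  have h1 : shift x (i + 1, j) = x (i, j) := lp.extendByZero_apply _ x (i, j)
  rw [child, lp.coeFn_smul, lp.coeFn_add, Pi.smul_apply, Pi.add_apply, h0, h1, zero_add,
    smul_eq_mul]

lemma mem_marks_two_mul {k k' : ℕ} {S : Set ℕ} : 2 * k' ∈ marks k S ↔ k' = k := by
  simp only [marks, mem_insert_iff, mem_image]
  constructor
  · rintro (h | ⟨j, -, h⟩) <;> omega
  · exact fun h => Or.inl (by rw [h])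

lemma mem_marks_two_mul_add_one {k j : ℕ} {S : Set ℕ} : 2 * j + 1 ∈ marks k S ↔ j ∈ S := by
  simp only [marks, mem_insert_iff, mem_image]
  constructor
  · rintro (h | ⟨j', hj', h⟩)
    · omega
    · rwa [show j = j' by omega]
  · exact fun h => Or.inr ⟨j, h, rfl⟩

lemma abs_indicator_one_le (s : Set ℕ) (j : ℕ) : |s.indicator (1 : ℕ → ℝ) j| ≤ 1 := by
  by_cases hj : j ∈ s <;> simp [hj]

lemma norm_child_le {k : ℕ} {S : Set ℕ} {x : ℓ^∞(ℕ × ℕ, ℝ)} (hx : ‖x‖ ≤ 1) :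
    ‖child k S x‖ ≤ (2 : ℝ)⁻¹ ^ k := by
  refine lp.norm_le_of_forall_le (by positivity) fun ⟨i, j⟩ => ?_
  rw [Real.norm_eq_abs]
  cases i with
  | zero =>
    rw [child_apply_zero, abs_mul, abs_of_pos (by positivity)]
    exact mul_le_of_le_one_right (by positivity) (abs_indicator_one_le _ _)
  | succ i =>
    rw [child_apply_succ, abs_mul, abs_of_pos (by positivity)]
    exact mul_le_of_le_one_right (by positivity)
      ((lp.norm_apply_le_norm ENNReal.top_ne_zero x (i, j)).trans hx)

lemma le_norm_child (k : ℕ) (S : Set ℕ) (x : ℓ^∞(ℕ × ℕ, ℝ)) :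
    (2 : ℝ)⁻¹ ^ k ≤ ‖child k S x‖ := by
  have := lp.norm_apply_le_norm ENNReal.top_ne_zero (child k S x) (0, 2 * k)
  rwa [child_apply_zero, indicator_of_mem (mem_marks_two_mul.2 rfl), Pi.one_apply, mul_one,
    Real.norm_eq_abs, abs_of_pos (by positivity)] at this

lemma le_dist_child_of_ne {k k' : ℕ} {S S' : Set ℕ} (h : (k, S) ≠ (k', S'))
    (x y : ℓ^∞(ℕ × ℕ, ℝ)) : (2 : ℝ)⁻¹ ^ k ≤ dist (child k S x) (child k' S' y) := by
  by_cases hk : k = k'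
  · subst hk
    obtain ⟨j, hj⟩ : ∃ j, ¬(j ∈ S ↔ j ∈ S') := by
      by_contra! hSS
      exact h (by rw [Set.ext hSS])
    have := lp.abs_sub_apply_le_dist (child k S x) (child k S' y) (0, 2 * j + 1)
    by_cases hjS : j ∈ S <;> by_cases hjS' : j ∈ S' <;>
      simp_all [child_apply_zero, indicator_of_mem, indicator_of_notMem, mem_marks_two_mul_add_one]
  · have := lp.abs_sub_apply_le_dist (child k S x) (child k' S' y) (0, 2 * k)
    rwa [child_apply_zero, child_apply_zero, indicator_of_mem (mem_marks_two_mul.2 rfl),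
      indicator_of_notMem (mt mem_marks_two_mul.1 hk), Pi.one_apply, mul_one, mul_zero, sub_zero,
      abs_of_pos (by positivity)] at this

lemma dist_child_child (k : ℕ) (S : Set ℕ) (x y : ℓ^∞(ℕ × ℕ, ℝ)) :
    dist (child k S x) (child k S y) = (2 : ℝ)⁻¹ ^ k * dist x y := by
  rw [dist_eq_norm, dist_eq_norm, child, child, ← smul_sub, add_sub_add_left_eq_sub, ← map_sub,
    norm_smul, LinearIsometry.norm_map, Real.norm_eq_abs, abs_of_pos (by positivity)]

lemma isClosedEmbedding_child (k : ℕ) (S : Set ℕ) : IsClosedEmbedding (child k S) :=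
  (Homeomorph.smulOfNeZero ((2 : ℝ)⁻¹ ^ k) (by positivity)).isClosedEmbedding.comp
    ((Homeomorph.addLeft (level0 (indicatorVec (marks k S)))).isClosedEmbedding.comp
      shift.isometry.isClosedEmbedding)

noncomputable def node : List (ℕ × Set ℕ) → ℓ^∞(ℕ × ℕ, ℝ)
  | [] => 0
  | (k, S) :: l => child k S (node l)

noncomputable def radius (l : List (ℕ × Set ℕ)) : ℝ := (l.map fun h => (2 : ℝ)⁻¹ ^ h.1).prod

@[simp] lemma radius_nil : radius [] = 1 := rfl

@[simp] lemma radius_cons (k : ℕ) (S : Set ℕ) (l) :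
    radius ((k, S) :: l) = (2 : ℝ)⁻¹ ^ k * radius l := List.prod_cons

lemma radius_pos (l : List (ℕ × Set ℕ)) : 0 < radius l :=
  List.prod_pos fun _ h => by obtain ⟨_, -, rfl⟩ := List.mem_map.1 h; positivity

lemma radius_le_one (l : List (ℕ × Set ℕ)) : radius l ≤ 1 := by
  induction l with
  | nil => simp
  | cons h l ih =>
    rw [← Prod.mk.eta (p := h), radius_cons]
    exact mul_le_one₀ (pow_le_one₀ (by norm_num) (by norm_num)) (radius_pos l).le ih

lemma norm_node_le_one (l : List (ℕ × Set ℕ)) : ‖node l‖ ≤ 1 := by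
  induction l with
  | nil => simp [node]
  | cons h l ih => exact (norm_child_le ih).trans (pow_le_one₀ (by norm_num) (by norm_num))

lemma radius_le_dist_of_not_prefix {l l' : List (ℕ × Set ℕ)} (hl : ¬l <+: l') :
    radius l ≤ dist (node l) (node l') := by
  induction l generalizing l' with
  | nil => exact absurd l'.nil_prefix hl
  | cons h l ih =>
    obtain ⟨k, S⟩ := h
    have hk : radius ((k, S) :: l) ≤ (2 : ℝ)⁻¹ ^ k := by
      rw [radius_cons]
      exact mul_le_of_le_one_right (by positivity) (radius_le_one l)
    cases l' with
    | nil => exact hk.trans ((le_norm_child k S _).trans_eq (dist_zero_right _).symm)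
    | cons h' l' =>
      by_cases hh : (k, S) = h'
      · subst hh
        rw [radius_cons, node, node, dist_child_child]
        exact mul_le_mul_of_nonneg_left (ih fun hp => hl (List.cons_prefix_cons.2 ⟨rfl, hp⟩))
          (by positivity)
      · exact hk.trans (le_dist_child_of_ne hh _ _)

lemma dist_node_append_le (l : List (ℕ × Set ℕ)) (k : ℕ) (S : Set ℕ) :
    dist (node l) (node (l ++ [(k, S)])) ≤ (2 : ℝ)⁻¹ ^ k := by
  induction l with
  | nil => simpa [node] using norm_child_le (k := k) (S := S) (by simp)
  | cons h l ih =>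
    rw [List.cons_append, node, node, dist_child_child]
    exact mul_le_of_le_one_left dist_nonneg (pow_le_one₀ (by norm_num) (by norm_num)) |>.trans ih

lemma node_injective : Function.Injective node := fun l l' h => by
  have hp : ∀ {l l'}, node l = node l' → l <+: l' := fun {l l'} h => by
    by_contra hl
    have := radius_le_dist_of_not_prefix hl
    rw [h, dist_self] at this
    exact (radius_pos l).not_ge this
  exact (hp h).eq_of_length ((hp h).length_le.antisymm (hp h.symm).length_le)

section Tree

universe u

variable (e : ℕ → Ordinal.{u})

/-- A node is the list of edge labels on its path from the root. The edge `(k, S)` enters a node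
of rank `e k`, and ranks decrease strictly along a path from a root of rank `β`. -/
def IsPath : Ordinal.{u} → List (ℕ × Set ℕ) → Prop
  | _, [] => True
  | β, (k, _) :: l => e k < β ∧ IsPath (e k) l

def rank : Ordinal.{u} → List (ℕ × Set ℕ) → Ordinal.{u}
  | β, [] => β
  | _, (k, _) :: l => rank (e k) l

variable {e}

lemma rank_le {β : Ordinal.{u}} {l : List (ℕ × Set ℕ)} (hl : IsPath e β l) : rank e β l ≤ β := by
  induction l generalizing β with
  | nil => exact le_rfl
  | cons h l ih => exact (ih hl.2).trans hl.1.le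

lemma rank_lt_of_prefix {β : Ordinal.{u}} {l l' : List (ℕ × Set ℕ)} (hl' : IsPath e β l')
    (hp : l <+: l') (hne : l ≠ l') : rank e β l' < rank e β l := by
  induction l generalizing β l' with
  | nil =>
    obtain _ | ⟨h, l'⟩ := l'
    · exact absurd rfl hne
    · exact (rank_le hl'.2).trans_lt hl'.1
  | cons h l ih =>
    obtain _ | ⟨h', l'⟩ := l'
    · exact absurd hp (by simp)
    · obtain ⟨rfl, htail⟩ := List.cons_prefix_cons.1 hp
      exact ih hl'.2 htail fun h => hne (h ▸ rfl)

lemma isPath_append {β : Ordinal.{u}} {l : List (ℕ × Set ℕ)} (hl : IsPath e β l) {k : ℕ}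
    (hk : e k < rank e β l) (S : Set ℕ) : IsPath e β (l ++ [(k, S)]) := by
  induction l generalizing β with
  | nil => exact ⟨hk, trivial⟩
  | cons h l ih => exact ⟨hl.1, ih hl.2 hk⟩

lemma rank_append (β : Ordinal.{u}) (l : List (ℕ × Set ℕ)) (k : ℕ) (S : Set ℕ) :
    rank e β (l ++ [(k, S)]) = e k := by
  induction l generalizing β with
  | nil => rfl
  | cons h l ih => exact ih _

lemma rank_lt_of_dist_lt {α : Ordinal.{u}} {l l' : List (ℕ × Set ℕ)} (hl' : IsPath e α l')
    (hd : dist (node l') (node l) < radius l) (hne : l' ≠ l) : rank e α l' < rank e α l := by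
  refine rank_lt_of_prefix hl' (not_not.1 fun hp => ?_) hne.symm
  exact (radius_le_dist_of_not_prefix hp).not_gt (dist_comm (node l) _ ▸ hd)

variable (e) in
/-- `tree e α β` is the `β`-th condensation derivative of `tree e α 0` (`CDiter_tree`). -/
def tree (α β : Ordinal.{u}) : Set ℓ^∞(ℕ × ℕ, ℝ) := node '' {l | IsPath e α l ∧ β ≤ rank e α l}

lemma tree_eq_empty {α β : Ordinal.{u}} (h : α < β) : tree e α β = ∅ :=
  image_eq_empty.2 <| eq_empty_of_forall_notMem fun _ hl => (rank_le hl.1).not_gt (h.trans_le hl.2)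

lemma zero_mem_tree {α β : Ordinal.{u}} (h : β ≤ α) : 0 ∈ tree e α β :=
  ⟨[], ⟨trivial, h⟩, rfl⟩

lemma tree_eq_insert {α β : Ordinal.{u}} (h : β ≤ α) :
    tree e α β =
      insert 0 (⋃ i : {i : ℕ × Set ℕ // e i.1 < α}, child i.1.1 i.1.2 '' tree e (e i.1.1) β) := by
  ext x
  constructor
  · rintro ⟨_ | ⟨⟨k, S⟩, l⟩, hl, rfl⟩
    · exact mem_insert _ _
    · exact mem_insert_of_mem _ <| mem_iUnion.2
        ⟨⟨(k, S), hl.1.1⟩, mem_image_of_mem _ ⟨l, ⟨hl.1.2, hl.2⟩, rfl⟩⟩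
  · rintro (rfl | hx)
    · exact zero_mem_tree h
    · obtain ⟨⟨⟨k, S⟩, hk⟩, _, ⟨l, hl, rfl⟩, rfl⟩ := mem_iUnion.1 hx
      exact ⟨(k, S) :: l, ⟨⟨hk, hl.1⟩, hl.2⟩, rfl⟩

lemma isClosed_tree (α β : Ordinal.{u}) : IsClosed (tree e α β) := by
  induction α using WellFoundedLT.induction with
  | _ α ih =>
  rcases lt_or_ge α β with h | h
  · rw [tree_eq_empty h]
    exact isClosed_empty
  rw [tree_eq_insert h]
  refine isClosed_insert_iUnion_of_dist_le
    (fun i => (isClosedEmbedding_child _ _).isClosedMap _ (ih _ i.2)) ?_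
  rintro ⟨⟨k, S⟩, _⟩ j hij _ ⟨_, ⟨l, -, rfl⟩, rfl⟩ _ ⟨_, -, rfl⟩
  rw [dist_zero_left]
  exact (norm_child_le (norm_node_le_one l)).trans
    (le_dist_child_of_ne (fun h => hij (Subtype.ext h)) _ _)

lemma CD_tree {α : Ordinal.{u}} (he : ∀ β < α, ∃ᶠ k in atTop, e k = β) (β : Ordinal.{u}) :
    CD _ (tree e α β) = tree e α (β + 1) := by
  apply subset_antisymm
  · intro p hp
    obtain ⟨l, ⟨hl, hβl⟩, rfl⟩ := (isClosed_tree α β).closure_subset (CD_subset_closure _ hp)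
    refine ⟨l, ⟨hl, Order.add_one_le_of_lt (lt_of_le_of_ne hβl fun hβ => ?_)⟩, rfl⟩
    -- a node of rank exactly `β` is isolated in `tree e α β`
    refine hp _ (Metric.ball_mem_nhds _ (radius_pos l)) ((countable_singleton (node l)).mono ?_)
    rintro _ ⟨hd, l', ⟨hl', hβl'⟩, rfl⟩
    by_contra hne
    exact (rank_lt_of_dist_lt hl' hd (fun h => hne (h ▸ rfl))).not_ge (hβ ▸ hβl')
  · rintro _ ⟨l, ⟨hl, hβl⟩, rfl⟩ U hU hcount
    have hβ : β < rank e α l := Order.add_one_le_iff.1 hβl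
    obtain ⟨ε, hε, hball⟩ := Metric.mem_nhds_iff.1 hU
    -- the children `l ++ [(k, S)]`, `S ⊆ ℕ`, have rank `β` and lie within `ε` of `node l`
    obtain ⟨k, rfl, hk⟩ : ∃ k, e k = β ∧ (2 : ℝ)⁻¹ ^ k < ε :=
      ((he β (hβ.trans_le (rank_le hl))).and_eventually
        ((tendsto_pow_atTop_nhds_zero_of_lt_one (by norm_num) (by norm_num)).eventually
          (gt_mem_nhds hε))).exists
    have hinj : Injective fun S => node (l ++ [(k, S)]) := fun S S' h => by
      simpa using node_injective h
    refine not_countable_univ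
      (countable_of_injective_of_countable_image hinj.injOn (hcount.mono ?_))
    rintro _ ⟨S, -, rfl⟩
    refine ⟨hball ?_, l ++ [(k, S)], ⟨isPath_append hl hβ S, (rank_append ..).ge⟩, rfl⟩
    rw [Metric.mem_ball, dist_comm]
    exact (dist_node_append_le l k S).trans_lt hk

lemma biInter_tree {α o : Ordinal.{u}} (ho : Order.IsSuccLimit o) :
    ⋂ b < o, tree e α b = tree e α o := by
  unfold tree
  rw [← node_injective.injOn.image_biInter_eq ⟨0, ho.bot_lt⟩]
  congr 1
  ext l
  simp only [mem_iInter₂, mem_ofPred_eq, ho.le_iff_forall_le]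
  exact ⟨fun h => ⟨(h 0 ho.bot_lt).1, fun b hb => (h b hb).2⟩, fun h b hb => ⟨h.1, h.2 b hb⟩⟩

lemma CDiter_tree {α : Ordinal.{u}} (he : ∀ β < α, ∃ᶠ k in atTop, e k = β) (o : Ordinal.{u}) :
    CDiter _ (tree e α 0) o = tree e α o := by
  induction o using Ordinal.limitRecOn with
  | zero => exact CDiter_zero _
  | add_one o ih => rw [CDiter_add_one, ih, CD_tree he]
  | limit o ho ih =>
    rw [CDiter_limit _ ho, ← biInter_tree ho, iInter_subtype]
    exact iInter₂_congr ih

lemma isTotallyImperfect_tree (α : Ordinal.{u}) : IsTotallyImperfect (tree e α 0) := by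
  intro P hP hperf
  by_contra hne
  obtain ⟨_, hx⟩ := nonempty_iff_ne_empty.2 hne
  obtain ⟨l₀, ⟨hl₀, -⟩, rfl⟩ := hP hx
  obtain ⟨r, ⟨l, hl, hlP, rfl⟩, hmin⟩ := wellFounded_lt.has_min
    {r | ∃ l, IsPath e α l ∧ node l ∈ P ∧ rank e α l = r} ⟨_, l₀, hl₀, hx, rfl⟩
  obtain ⟨_, ⟨hd, hyP⟩, hne'⟩ :=
    accPt_iff_nhds.1 (hperf.acc _ hlP) _ (Metric.ball_mem_nhds _ (radius_pos l))
  obtain ⟨l', ⟨hl', -⟩, rfl⟩ := hP hyP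
  exact hmin _ ⟨l', hl', hyP, rfl⟩ (rank_lt_of_dist_lt hl' hd fun h => hne' (h ▸ rfl))

end Tree

end CondensationTree

theorem rank_ge_omega1_of_linfty_subspace {X : Type*} [NormedAddCommGroup X]
    [NormedSpace ℝ X]
    (h : ∃ f : lp (fun _ : ℕ => ℝ) ⊤ →L[ℝ] X, Topology.IsClosedEmbedding (⇑f)) :
    ∀ α : Ordinal, α < (Cardinal.aleph 1).ord →
      ∃ A : Set X, IsClosed A ∧ (∀ P ⊆ A, Perfect P → P = ∅) ∧
        CDiter X A α ≠ ∅ ∧ CDiter X A (α + 1) = ∅ := by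
  intro α hα
  obtain ⟨f, hf⟩ := h
  obtain ⟨e, he⟩ := exists_frequently_eq_of_countable (countable_Iio_of_lt_ord_aleph_one hα)
  have hι : IsClosedEmbedding (f ∘ lp.extendByZero Nat.pairEquiv.injective) :=
    hf.comp (lp.extendByZero _).isometry.isClosedEmbedding
  refine ⟨_ '' CondensationTree.tree e α 0, hι.isClosedMap _ (CondensationTree.isClosed_tree α 0),
    hι.isEmbedding.isTotallyImperfect_image (CondensationTree.isTotallyImperfect_tree α), ?_, ?_⟩
    <;> rw [hι.CDiter_image, CondensationTree.CDiter_tree he]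
  · exact (Nonempty.image _ ⟨0, CondensationTree.zero_mem_tree le_rfl⟩).ne_empty
  · rw [CondensationTree.tree_eq_empty (lt_add_one α), image_empty]
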